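/- With R > 1, γ ∈ (0,1], and ψ ≥ (R-1)/γ - (δ_s-δ_M)/δ_M, the closed-loop SIT system with feedback u = ψ(1-ν)ν_E E + (δ_s-δ_M)(M+M_s) has the origin as its only equilibrium in [0,∞)⁵. Concretely: if (E,F,M,F_s,M_s) ∈ [0,∞)⁵ makes all five right-hand sides vanish (with the convention M/(M+γM_s)=0 at M=M_s=0), then E=F=M=F_s=M_s=0. -/

import Mathlib

/-!
At a positive equilibrium the fertile-mating balance reads `R (1 - E/K) M = M + γ M_s`, so
`γ M_s < (R - 1) M`. The feedback law, on the other hand, fixes `M_s = (ψ + (δ_s - δ_M)/δ_M) M`, and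
the lower bound on `ψ` turns this into `γ M_s ≥ (R - 1) M`. Hence `E = 0`, and the remaining
equations are then linear and force every other compartment to vanish.
-/

namespace SIT

theorem eq_zero_of_egg_eq_zero {ν_E δ_F δ_M δ_s ν γ ψ F M F_s M_s : ℝ}
    (hδF : δ_F ≠ 0) (hδM : δ_M ≠ 0)
    (heqF : ν * ν_E * 0 * (M / (M + γ * M_s)) - δ_F * F = 0)
    (heqM : (1 - ν) * ν_E * 0 - δ_M * M = 0)
    (heqFs : ν * ν_E * 0 * (γ * M_s / (M + γ * M_s)) - δ_F * F_s = 0)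
    (heqMs : ψ * (1 - ν) * ν_E * 0 + (δ_s - δ_M) * (M + M_s) - δ_s * M_s = 0) :
    F = 0 ∧ M = 0 ∧ F_s = 0 ∧ M_s = 0 := by
  have hM : M = 0 := (mul_eq_zero.mp (by linear_combination -heqM)).resolve_left hδM
  subst hM
  refine ⟨(mul_eq_zero.mp (by linear_combination -heqF)).resolve_left hδF, rfl,
    (mul_eq_zero.mp (by linear_combination -heqFs)).resolve_left hδF, ?_⟩
  exact (mul_eq_zero.mp (by linear_combination -heqMs)).resolve_left hδM

theorem sub_one_mul_le_of_feedback {ν_E δ_M δ_s ν γ ψ R E M M_s : ℝ}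
    (hγ : 0 < γ) (hδM : 0 < δ_M) (hM : 0 ≤ M)
    (hψ : (R - 1) / γ - (δ_s - δ_M) / δ_M ≤ ψ)
    (heqM : (1 - ν) * ν_E * E - δ_M * M = 0)
    (heqMs : ψ * (1 - ν) * ν_E * E + (δ_s - δ_M) * (M + M_s) - δ_s * M_s = 0) :
    (R - 1) * M ≤ γ * M_s := by
  have hMs : M_s = (ψ + (δ_s - δ_M) / δ_M) * M := by
    field_simp
    linear_combination ψ * heqM - heqMs
  have hR : R - 1 ≤ γ * (ψ + (δ_s - δ_M) / δ_M) := by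
    rw [div_sub' hγ.ne', div_le_iff₀ hγ] at hψ
    linarith
  calc (R - 1) * M ≤ γ * (ψ + (δ_s - δ_M) / δ_M) * M := by gcongr
    _ = γ * M_s := by rw [hMs, mul_assoc]

theorem reproduction_mul_eq {β_E ν_E δ_E δ_F K ν γ R E F M M_s : ℝ}
    (hδF : δ_F ≠ 0) (hδE : δ_E + ν_E ≠ 0) (hE : E ≠ 0) (hD : M + γ * M_s ≠ 0)
    (hR : R = β_E * ν * ν_E / (δ_F * (δ_E + ν_E)))
    (heqE : β_E * F * (1 - E / K) - (ν_E + δ_E) * E = 0)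
    (heqF : ν * ν_E * E * (M / (M + γ * M_s)) - δ_F * F = 0) :
    R * (1 - E / K) * M = M + γ * M_s := by
  have hF : δ_F * F * (M + γ * M_s) = ν * ν_E * E * M := by
    field_simp at heqF
    linear_combination -heqF
  have hβ : β_E * ν * ν_E = R * (δ_F * (δ_E + ν_E)) := by
    rw [hR]
    field_simp
  refine mul_left_cancel₀ (by positivity : δ_F * (δ_E + ν_E) * E ≠ 0) ?_
  linear_combination (δ_F * (M + γ * M_s)) * heqE - (β_E * (1 - E / K)) * hF
    - ((1 - E / K) * E * M) * hβ

end SIT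

open SIT in
theorem origin_unique_equilibrium_general (β_E ν_E δ_E δ_F δ_M δ_s K ν γ ψ : ℝ)
    (hνE : 0 < ν_E) (hδE : 0 < δ_E) (hδF : 0 < δ_F) (hδM : 0 < δ_M)
    (hK : 0 < K) (hν : ν ∈ Set.Ioo (0:ℝ) 1) (hγ : γ ∈ Set.Ioc (0:ℝ) 1)
    (R : ℝ) (hR : R = β_E * ν * ν_E / (δ_F * (δ_E + ν_E))) (hR1 : 1 < R)
    (hψ : (R - 1) / γ - (δ_s - δ_M) / δ_M ≤ ψ)
    (E F M F_s M_s : ℝ)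
    (hEpos : 0 ≤ E) (hMspos : 0 ≤ M_s)
    (heqE : β_E * F * (1 - E / K) - (ν_E + δ_E) * E = 0)
    (heqF : ν * ν_E * E * (M / (M + γ * M_s)) - δ_F * F = 0)
    (heqM : (1 - ν) * ν_E * E - δ_M * M = 0)
    (heqFs : ν * ν_E * E * (γ * M_s / (M + γ * M_s)) - δ_F * F_s = 0)
    (heqMs : ψ * (1 - ν) * ν_E * E + (δ_s - δ_M) * (M + M_s) - δ_s * M_s = 0) :
    E = 0 ∧ F = 0 ∧ M = 0 ∧ F_s = 0 ∧ M_s = 0 := by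
  rcases hEpos.eq_or_lt with rfl | hE
  · exact ⟨rfl, eq_zero_of_egg_eq_zero hδF.ne' hδM.ne' heqF heqM heqFs heqMs⟩
  exfalso
  have hM : 0 < M := by
    have : 0 < (1 - ν) * ν_E * E := mul_pos (mul_pos (sub_pos.2 hν.2) hνE) hE
    exact pos_of_mul_pos_right (by linarith : 0 < δ_M * M) hδM.le
  have hD : 0 < M + γ * M_s := add_pos_of_pos_of_nonneg hM (mul_nonneg hγ.1.le hMspos)
  have hbalance := reproduction_mul_eq hδF.ne' (by positivity) hE.ne' hD.ne' hR heqE heqF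
  have hbound := sub_one_mul_le_of_feedback hγ.1 hδM hM.le hψ heqM heqMs
  have : 0 < R * (E / K) * M := mul_pos (mul_pos (by linarith) (div_pos hE hK)) hM
  linarith [show R * (1 - E / K) * M = R * M - R * (E / K) * M by ring]

theorem origin_unique_equilibrium (β_E ν_E δ_E δ_F δ_M δ_s K ν γ ψ : ℝ)
    (hβ : 0 < β_E) (hνE : 0 < ν_E) (hδE : 0 < δ_E) (hδF : 0 < δ_F) (hδM : 0 < δ_M)
    (hδ : δ_M < δ_s) (hK : 0 < K) (hν : ν ∈ Set.Ioo (0:ℝ) 1) (hγ : γ ∈ Set.Ioc (0:ℝ) 1)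
    (R : ℝ) (hR : R = β_E * ν * ν_E / (δ_F * (δ_E + ν_E))) (hR1 : 1 < R)
    (hψ : (R - 1) / γ - (δ_s - δ_M) / δ_M ≤ ψ)
    (E F M F_s M_s : ℝ)
    (hEpos : 0 ≤ E) (hFpos : 0 ≤ F) (hMpos : 0 ≤ M) (hFspos : 0 ≤ F_s) (hMspos : 0 ≤ M_s)
    (heqE : β_E * F * (1 - E / K) - (ν_E + δ_E) * E = 0)
    (heqF : ν * ν_E * E * (M / (M + γ * M_s)) - δ_F * F = 0)
    (heqM : (1 - ν) * ν_E * E - δ_M * M = 0)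
    (heqFs : ν * ν_E * E * (γ * M_s / (M + γ * M_s)) - δ_F * F_s = 0)
    (heqMs : ψ * (1 - ν) * ν_E * E + (δ_s - δ_M) * (M + M_s) - δ_s * M_s = 0) :
    E = 0 ∧ F = 0 ∧ M = 0 ∧ F_s = 0 ∧ M_s = 0 :=
  origin_unique_equilibrium_general β_E ν_E δ_E δ_F δ_M δ_s K ν γ ψ hνE hδE hδF hδM hK hν hγ R hR
    hR1 hψ E F M F_s M_s hEpos hMspos heqE heqF heqM heqFs heqMs
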